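/- arXiv:2012.05519 — 3 statements merged into one kernel-verified Lean document; each statement's English description precedes it below -/
import Mathlib

section
/- For any real numbers q₁ ≤ q₂, the difference of expected costs satisfies E[C(q₂,D)] − E[C(q₁,D)] = ∫_{(q₁,q₂)} ( r^w − b⁻ + (b⁻ − b⁺)·F_D(t) ) dt, where the integral is the Lebesgue integral over the interval (q₁, q₂). -/
/-!
For a fixed demand `d`, the cost `C(q, d) = (r^w - b⁻) q + b⁻ d + (b⁻ - b⁺) (q - d)⁺` is piecewise
linear in `q`, and `(q₂ - d)⁺ - (q₁ - d)⁺` is the length of `[d, ∞) ∩ (q₁, q₂)`. Hence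
`C(q₂, d) - C(q₁, d) = ∫_{(q₁, q₂)} (r^w - b⁻ + (b⁻ - b⁺) 𝟙{d ≤ t}) dt`; taking expectations and
swapping the two integrals (Fubini, the integrand being bounded) turns `𝟙{D ≤ t}` into `F_D(t)`.
-/

open MeasureTheory Set

theorem setIntegral_Ioo_indicator_Ici {a b : ℝ} (hab : a ≤ b) (d : ℝ) :
    ∫ t in Ioo a b, (Ici d).indicator (1 : ℝ → ℝ) t = max (b - d) 0 - max (a - d) 0 := by
  rw [integral_indicator_one measurableSet_Ici, measureReal_restrict_apply measurableSet_Ici]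
  rcases le_or_gt d a with hda | had
  · have : Ici d ∩ Ioo a b = Ioo a b := inter_eq_right.2 fun t ht => hda.trans ht.1.le
    rw [this, Real.volume_real_Ioo_of_le hab, max_eq_left (by linarith),
      max_eq_left (by linarith)]
    ring
  rcases le_or_gt d b with hdb | hbd
  · have : Ici d ∩ Ioo a b = Ico d b := by
      ext t
      exact ⟨fun h => ⟨h.1, h.2.2⟩, fun h => ⟨h.1, had.trans_le h.1, h.2⟩⟩
    rw [this, Real.volume_real_Ico_of_le hdb, max_eq_left (by linarith),
      max_eq_right (by linarith)]
    ring
  · have : Ici d ∩ Ioo a b = ∅ :=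
      eq_empty_of_forall_notMem fun t h => (h.2.2.trans hbd).not_ge h.1
    rw [this, measureReal_empty, max_eq_right (by linarith), max_eq_right (by linarith)]
    ring

theorem cost_sub_cost_eq_setIntegral (r bm bp d : ℝ) {a b : ℝ} (hab : a ≤ b) :
    (r * b + bm * max (d - b) 0 - bp * max (b - d) 0)
        - (r * a + bm * max (d - a) 0 - bp * max (a - d) 0)
      = ∫ t in Ioo a b, (r - bm + (bm - bp) * (Ici d).indicator 1 t) := by
  have hsplit (q : ℝ) : max (d - q) 0 - max (q - d) 0 = d - q := by
    simpa only [neg_sub] using max_zero_sub_max_neg_zero_eq_self (d - q)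
  rw [integral_add (integrable_const _)
      (((integrable_const 1).indicator measurableSet_Ici).const_mul _),
    integral_const, integral_const_mul, setIntegral_Ioo_indicator_Ici hab d,
    measureReal_restrict_apply_univ, Real.volume_real_Ioo_of_le hab, smul_eq_mul]
  linear_combination bm * hsplit b - bm * hsplit a

section

variable {Ω : Type*} [MeasurableSpace Ω] {P : Measure Ω} {D : Ω → ℝ}

theorem integrable_uncurry_affine_indicator_Ici [IsFiniteMeasure P] {ν : Measure ℝ}
    [IsFiniteMeasure ν] (hD : AEMeasurable D P) (α β : ℝ) :
    Integrable (Function.uncurry fun ω t => α + β * (Ici (D ω)).indicator (1 : ℝ → ℝ) t)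
      (P.prod ν) :=
  (integrable_const α).add <| .const_mul (c := β) <| (integrable_const (1 : ℝ)).indicator₀ <|
    nullMeasurableSet_le (f := fun p : Ω × ℝ => D p.1) hD.comp_fst measurable_snd.aemeasurable

theorem integral_affine_indicator_Ici [IsProbabilityMeasure P] (hD : AEMeasurable D P)
    (α β t : ℝ) :
    ∫ ω, (α + β * (Ici (D ω)).indicator (1 : ℝ → ℝ) t) ∂P = α + β * P.real {ω | D ω ≤ t} := by
  have hS : NullMeasurableSet {ω | D ω ≤ t} P := nullMeasurableSet_le hD aemeasurable_const
  change ∫ ω, (α + β * {ω | D ω ≤ t}.indicator (fun _ => (1 : ℝ)) ω) ∂P = _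
  rw [integral_add (integrable_const α) (((integrable_const 1).indicator₀ hS).const_mul β),
    integral_const_mul, integral_indicator₀ hS, setIntegral_const]
  simp

end

/-- For `q₁ ≤ q₂`,
`E[C(q₂,D)] − E[C(q₁,D)] = ∫_{(q₁,q₂)} (r^w − b⁻ + (b⁻ − b⁺)·F_D(t)) dt`. -/
theorem expected_cost_difference_eq_integral
    {Ω : Type*} [MeasurableSpace Ω] (P : Measure Ω) [IsProbabilityMeasure P]
    (D : Ω → ℝ) (hD : Integrable D P)
    (F : ℝ → ℝ) (hF : ∀ t, F t = (P {ω | D ω ≤ t}).toReal)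
    (rw0 bm bp : ℝ)
    (C : ℝ → Ω → ℝ)
    (hC : ∀ q ω, C q ω
      = rw0 * q + bm * max (D ω - q) 0 - bp * max (q - D ω) 0)
    (q₁ q₂ : ℝ) (hq : q₁ ≤ q₂) :
    (∫ ω, C q₂ ω ∂P) - (∫ ω, C q₁ ω ∂P)
      = ∫ t in Set.Ioo q₁ q₂, (rw0 - bm + (bm - bp) * F t) := by
  have hCint (q : ℝ) : Integrable (C q) P := by
    rw [funext (hC q)]
    exact ((integrable_const _).add ((hD.sub (integrable_const q)).pos_part.const_mul bm)).sub
      (((integrable_const q).sub hD).pos_part.const_mul bp)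
  calc (∫ ω, C q₂ ω ∂P) - (∫ ω, C q₁ ω ∂P)
      = ∫ ω, (∫ t in Ioo q₁ q₂, (rw0 - bm + (bm - bp) * (Ici (D ω)).indicator 1 t)) ∂P := by
        rw [← integral_sub (hCint q₂) (hCint q₁)]
        refine integral_congr_ae (ae_of_all _ fun ω => ?_)
        simp only [hC]
        exact cost_sub_cost_eq_setIntegral rw0 bm bp (D ω) hq
    _ = ∫ t in Ioo q₁ q₂, ∫ ω, (rw0 - bm + (bm - bp) * (Ici (D ω)).indicator 1 t) ∂P :=
        integral_integral_swap
          (integrable_uncurry_affine_indicator_Ici hD.aemeasurable _ _)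
    _ = ∫ t in Ioo q₁ q₂, (rw0 - bm + (bm - bp) * F t) := by
        simp only [integral_affine_indicator_Ici hD.aemeasurable, hF, measureReal_def]
end

section
/- Suppose the cumulative distribution function F_D is continuous at the point q ∈ ℝ. Then the expected-cost function g(q) = E[C(q,D)] is differentiable at q with derivative g′(q) = r^w − b⁻·(1 − F_D(q)) − b⁺·F_D(q). -/
/-!
Since `max (D - q) 0 = (D - q) + max (q - D) 0`, the expected cost is an affine function of `q`
plus `(b⁻ - b⁺) • H q` with `H q = E[max (q - D) 0]`. For `a ≤ b` the increment
`max (b - D) 0 - max (a - D) 0` lies between `(b - a) • 1{D ≤ a}` and `(b - a) • 1{D ≤ b}`,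
so the difference quotients of `H` are squeezed between values of `F_D`, and continuity of
`F_D` at `q` gives `H' q = F_D q`.
-/

open MeasureTheory Set Filter Topology

theorem hasDerivAt_of_sub_mem_Icc {H F : ℝ → ℝ} {q : ℝ}
    (hH : ∀ a b, a ≤ b → H b - H a ∈ Icc (F a * (b - a)) (F b * (b - a)))
    (hF : ContinuousAt F q) : HasDerivAt H (F q) q := by
  have slope_mem : ∀ a b, a < b → slope H a b ∈ Icc (F a) (F b) := fun a b hab => by
    obtain ⟨hlo, hhi⟩ := hH a b hab.le
    rw [slope_def_field]
    exact ⟨(le_div_iff₀ (sub_pos.2 hab)).2 hlo, (div_le_iff₀ (sub_pos.2 hab)).2 hhi⟩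
  have slope_mem_uIcc : ∀ x ≠ q, slope H q x ∈ uIcc (F q) (F x) := fun x hx => by
    rcases hx.lt_or_gt with hxq | hqx
    · rw [slope_comm, uIcc_comm]
      exact Icc_subset_uIcc (slope_mem x q hxq)
    · exact Icc_subset_uIcc (slope_mem q x hqx)
  have hlower : Tendsto (fun x => min (F q) (F x)) (𝓝[≠] q) (𝓝 (F q)) := by
    simpa only [min_self] using
      ((tendsto_const_nhds (x := F q)).min hF).mono_left nhdsWithin_le_nhds
  have hupper : Tendsto (fun x => max (F q) (F x)) (𝓝[≠] q) (𝓝 (F q)) := by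
    simpa only [max_self] using
      ((tendsto_const_nhds (x := F q)).max hF).mono_left nhdsWithin_le_nhds
  rw [hasDerivAt_iff_tendsto_slope]
  exact tendsto_of_tendsto_of_tendsto_of_le_of_le' hlower hupper
    (eventually_nhdsWithin_of_forall fun x hx => (slope_mem_uIcc x hx).1)
    (eventually_nhdsWithin_of_forall fun x hx => (slope_mem_uIcc x hx).2)

section
variable {Ω : Type*} [MeasurableSpace Ω] {P : Measure Ω} [IsFiniteMeasure P] {D : Ω → ℝ}

theorem integrable_max_sub (hD : Integrable D P) (a : ℝ) :
    Integrable (fun ω => max (a - D ω) 0) P :=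
  ((integrable_const a).sub hD).pos_part

theorem integral_max_sub_sub_mem_Icc (hD : Integrable D P) {a b : ℝ} (hab : a ≤ b) :
    ∫ ω, max (b - D ω) 0 ∂P - ∫ ω, max (a - D ω) 0 ∂P ∈
      Icc (P.real {ω | D ω ≤ a} * (b - a)) (P.real {ω | D ω ≤ b} * (b - a)) := by
  have hset : ∀ c, NullMeasurableSet {ω | D ω ≤ c} P := fun c =>
    hD.aemeasurable.nullMeasurableSet_preimage measurableSet_Iic
  have hind : ∀ c, Integrable ({ω | D ω ≤ c}.indicator fun _ => b - a) P := fun c =>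
    (integrable_const _).indicator₀ (hset c)
  have hint : ∀ c, ∫ ω, {ω | D ω ≤ c}.indicator (fun _ => b - a) ω ∂P
      = P.real {ω | D ω ≤ c} * (b - a) := fun c => by
    rw [integral_indicator₀ (hset c), setIntegral_const, smul_eq_mul]
  have hdiff := (integrable_max_sub hD b).sub (integrable_max_sub hD a)
  rw [← integral_sub (integrable_max_sub hD b) (integrable_max_sub hD a), ← hint, ← hint]
  refine ⟨integral_mono (hind a) hdiff fun ω => ?_, integral_mono hdiff (hind b) fun ω => ?_⟩
  · by_cases h : D ω ≤ a <;> simp only [indicator_apply, mem_ofPred_eq, h, if_true, if_false]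
    · rw [max_eq_left (by linarith), max_eq_left (by linarith)]; linarith
    · exact sub_nonneg.2 (max_le_max_right 0 (by linarith))
  · by_cases h : D ω ≤ b <;> simp only [indicator_apply, mem_ofPred_eq, h, if_true, if_false]
    · rw [max_eq_left (by linarith)]
      linarith [le_max_left (a - D ω) 0, le_max_right (a - D ω) 0]
    · rw [max_eq_right (by linarith), max_eq_right (by linarith), sub_self]

theorem hasDerivAt_integral_max_sub (hD : Integrable D P) {q : ℝ}
    (hF : ContinuousAt (fun t => P.real {ω | D ω ≤ t}) q) :
    HasDerivAt (fun a => ∫ ω, max (a - D ω) 0 ∂P) (P.real {ω | D ω ≤ q}) q :=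
  hasDerivAt_of_sub_mem_Icc (fun _ _ hab => integral_max_sub_sub_mem_Icc hD hab) hF

end

theorem integral_cost_eq {Ω : Type*} [MeasurableSpace Ω] {P : Measure Ω} [IsProbabilityMeasure P]
    {D : Ω → ℝ} (hD : Integrable D P) (c bm bp a : ℝ) :
    ∫ ω, (c * a + bm * max (D ω - a) 0 - bp * max (a - D ω) 0) ∂P
      = c * a + bm * (∫ ω, D ω ∂P - a) + (bm - bp) * ∫ ω, max (a - D ω) 0 ∂P := by
  have hpt : (fun ω => c * a + bm * max (D ω - a) 0 - bp * max (a - D ω) 0)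
      = fun ω => c * a + bm * (D ω - a) + (bm - bp) * max (a - D ω) 0 := funext fun ω => by
    have := max_zero_sub_eq_self (D ω - a)
    rw [neg_sub] at this
    linear_combination bm * this
  have h1 : Integrable (fun ω => bm * (D ω - a)) P := (hD.sub (integrable_const a)).const_mul bm
  have h2 := (integrable_max_sub hD a).const_mul (bm - bp)
  have h01 : Integrable (fun ω => c * a + bm * (D ω - a)) P := (integrable_const _).add h1
  rw [hpt, integral_add h01 h2, integral_add (integrable_const _) h1,
    integral_const_mul, integral_const_mul, integral_sub hD (integrable_const a)]
  simp only [integral_const, probReal_univ, one_smul, integral_const_mul]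

/-- If the CDF `F_D` is continuous at `q`, then the expected-cost
function `g(q) = E[C(q,D)]` is differentiable at `q` with derivative
`g′(q) = r^w − b⁻·(1 − F_D(q)) − b⁺·F_D(q)`. -/
theorem expected_cost_hasDerivAt
    {Ω : Type*} [MeasurableSpace Ω] (P : Measure Ω) [IsProbabilityMeasure P]
    (D : Ω → ℝ) (hD : Integrable D P)
    (F : ℝ → ℝ) (hF : ∀ t, F t = (P {ω | D ω ≤ t}).toReal)
    (rw0 bm bp : ℝ)
    (C : ℝ → Ω → ℝ)
    (hC : ∀ q ω, C q ω
      = rw0 * q + bm * max (D ω - q) 0 - bp * max (q - D ω) 0)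
    (g : ℝ → ℝ) (hg : ∀ q, g q = ∫ ω, C q ω ∂P)
    (q : ℝ) (hcont : ContinuousAt F q) :
    HasDerivAt g (rw0 - bm * (1 - F q) - bp * F q) q := by
  obtain rfl : F = fun t => P.real {ω | D ω ≤ t} := funext hF
  obtain rfl : g = fun a => rw0 * a + bm * (∫ ω, D ω ∂P - a)
      + (bm - bp) * ∫ ω, max (a - D ω) 0 ∂P :=
    funext fun a => by simp only [hg, hC, integral_cost_eq hD]
  have hderiv := (((hasDerivAt_id' q).const_mul rw0).add
    (((hasDerivAt_id' q).const_sub (∫ ω, D ω ∂P)).const_mul bm)).add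
    ((hasDerivAt_integral_max_sub hD hcont).const_mul (bm - bp))
  exact hderiv.congr_deriv (by ring)
end

section
/- Assume b⁻ ≥ r^w, r^w ≥ b⁺, and b⁻ > b⁺, and let γ = (b⁻ − r^w)/(b⁻ − b⁺). If q* ∈ ℝ satisfies F_D(q*) = γ, then q* minimizes the expected cost: for every q ∈ ℝ, E[C(q*,D)] ≤ E[C(q,D)]. -/
/-!
Writing `max (q - d) 0 = max (d - q) 0 + (q - d)`, the cost is
`(r - b⁺) q + b⁺ d + (b⁻ - b⁺) max (d - q) 0`, convex in `q` because `b⁻ ≥ b⁺`, with subgradient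
`r - b⁻ + (b⁻ - b⁺) 1{d ≤ q*}` at `q*`. Taking expectations in the subgradient inequality, the
expected subgradient is `r - b⁻ + (b⁻ - b⁺) F_D(q*)`, which vanishes exactly when `F_D(q*) = γ`.
-/

open MeasureTheory

def newsvendorCost (r bm bp q d : ℝ) : ℝ :=
  r * q + bm * max (d - q) 0 - bp * max (q - d) 0

lemma newsvendorCost_eq (r bm bp q d : ℝ) :
    newsvendorCost r bm bp q d = (r - bp) * q + bp * d + (bm - bp) * max (d - q) 0 := by
  have h := max_zero_sub_max_neg_zero_eq_self (q - d)
  rw [neg_sub] at h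
  unfold newsvendorCost
  linear_combination (-bp) * h

lemma max_sub_zero_le_add_mul_indicator (d qs q : ℝ) :
    max (d - qs) 0 ≤ max (d - q) 0 + (q - qs) * (1 - (Set.Iic qs).indicator 1 d) := by
  by_cases hd : d ≤ qs
  · simp [hd]
  · simp only [Set.indicator_of_notMem (Set.notMem_Iic.2 (not_le.1 hd)), sub_zero, mul_one]
    rw [max_eq_left (by linarith)]
    linarith [le_max_left (d - q) 0]

lemma newsvendorCost_le_add_mul {r bm bp : ℝ} (h : bp ≤ bm) (qs q d : ℝ) :
    newsvendorCost r bm bp qs d ≤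
      newsvendorCost r bm bp q d
        + (qs - q) * (r - bm + (bm - bp) * (Set.Iic qs).indicator 1 d) := by
  rw [newsvendorCost_eq, newsvendorCost_eq]
  linear_combination (bm - bp) * max_sub_zero_le_add_mul_indicator d qs q

section Expectation

variable {Ω : Type*} [MeasurableSpace Ω] {P : Measure Ω} {D : Ω → ℝ}

lemma integrable_newsvendorCost [IsFiniteMeasure P] (hD : Integrable D P) (r bm bp q : ℝ) :
    Integrable (fun ω => newsvendorCost r bm bp q (D ω)) P :=
  ((integrable_const (r * q)).add (((hD.sub (integrable_const q)).pos_part).const_mul bm)).sub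
    ((((integrable_const q).sub hD).pos_part).const_mul bp)

lemma integral_indicator_Iic_comp (hD : AEMeasurable D P) (t : ℝ) :
    ∫ ω, (Set.Iic t).indicator 1 (D ω) ∂P = P.real {ω | D ω ≤ t} := by
  change ∫ ω, {ω | D ω ≤ t}.indicator 1 ω ∂P = _
  rw [integral_indicator₀ (nullMeasurableSet_le hD aemeasurable_const)]
  simp only [Pi.one_apply, setIntegral_const, smul_eq_mul, mul_one]

lemma integral_newsvendorCost_le [IsProbabilityMeasure P] (hD : Integrable D P)
    {r bm bp : ℝ} (h : bp ≤ bm) (qs q : ℝ) :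
    ∫ ω, newsvendorCost r bm bp qs (D ω) ∂P ≤
      ∫ ω, newsvendorCost r bm bp q (D ω) ∂P
        + (qs - q) * (r - bm + (bm - bp) * P.real {ω | D ω ≤ qs}) := by
  have hind : Integrable (fun ω => (Set.Iic qs).indicator (1 : ℝ → ℝ) (D ω)) P :=
    (integrable_const 1).indicator₀ (nullMeasurableSet_le hD.aemeasurable aemeasurable_const)
  have hsubgradient : Integrable
      (fun ω => (qs - q) * (r - bm + (bm - bp) * (Set.Iic qs).indicator 1 (D ω))) P :=
    ((integrable_const _).add (hind.const_mul _)).const_mul _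
  calc ∫ ω, newsvendorCost r bm bp qs (D ω) ∂P
      ≤ ∫ ω, newsvendorCost r bm bp q (D ω)
          + (qs - q) * (r - bm + (bm - bp) * (Set.Iic qs).indicator 1 (D ω)) ∂P :=
        integral_mono (integrable_newsvendorCost hD ..)
          ((integrable_newsvendorCost hD ..).add hsubgradient)
          fun ω => newsvendorCost_le_add_mul h qs q (D ω)
    _ = _ := by
      rw [integral_add (integrable_newsvendorCost hD ..) hsubgradient, integral_const_mul,
        integral_add (integrable_const _) (hind.const_mul _), integral_const_mul,
        integral_indicator_Iic_comp hD.aemeasurable, integral_const, probReal_univ, one_smul]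

end Expectation

theorem cost_ratio_quantile_minimizes_expected_cost_general
    {Ω : Type*} [MeasurableSpace Ω] (P : Measure Ω) [IsProbabilityMeasure P]
    (D : Ω → ℝ) (hD : Integrable D P)
    (F : ℝ → ℝ) (hF : ∀ t, F t = (P {ω | D ω ≤ t}).toReal)
    (rw0 bm bp : ℝ) (h3 : bp < bm)
    (γ : ℝ) (hγ : γ = (bm - rw0) / (bm - bp))
    (C : ℝ → Ω → ℝ)
    (hC : ∀ q ω, C q ω
      = rw0 * q + bm * max (D ω - q) 0 - bp * max (q - D ω) 0)
    (qs : ℝ) (hqs : F qs = γ) :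
    ∀ q : ℝ, ∫ ω, C qs ω ∂P ≤ ∫ ω, C q ω ∂P := by
  intro q
  obtain rfl : C = fun q ω => newsvendorCost rw0 bm bp q (D ω) := funext₂ hC
  have hsubgradient_zero : rw0 - bm + (bm - bp) * P.real {ω | D ω ≤ qs} = 0 := by
    rw [measureReal_def, ← hF, hqs, hγ]
    field_simp [(sub_pos.2 h3).ne']
    ring
  simpa [hsubgradient_zero] using integral_newsvendorCost_le hD (r := rw0) h3.le qs q

/-- Assuming `b⁻ ≥ r^w`, `r^w ≥ b⁺` and `b⁻ > b⁺`, with cost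
ratio `γ = (b⁻ − r^w)/(b⁻ − b⁺)`, any `q*` with `F_D(q*) = γ` minimizes the
expected cost. -/
theorem cost_ratio_quantile_minimizes_expected_cost
    {Ω : Type*} [MeasurableSpace Ω] (P : Measure Ω) [IsProbabilityMeasure P]
    (D : Ω → ℝ) (hD : Integrable D P)
    (F : ℝ → ℝ) (hF : ∀ t, F t = (P {ω | D ω ≤ t}).toReal)
    (rw0 bm bp : ℝ) (h1 : rw0 ≤ bm) (h2 : bp ≤ rw0) (h3 : bp < bm)
    (γ : ℝ) (hγ : γ = (bm - rw0) / (bm - bp))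
    (C : ℝ → Ω → ℝ)
    (hC : ∀ q ω, C q ω
      = rw0 * q + bm * max (D ω - q) 0 - bp * max (q - D ω) 0)
    (qs : ℝ) (hqs : F qs = γ) :
    ∀ q : ℝ, ∫ ω, C qs ω ∂P ≤ ∫ ω, C q ω ∂P :=
  cost_ratio_quantile_minimizes_expected_cost_general P D hD F hF rw0 bm bp h3 γ hγ C hC qs hqs
end
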